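/- In the basic prototype with the bootstrap particle filter, the prototype estimate ψ̃_T is an unbiased estimate of ψ_T, that is, E[ψ̃_T] = ψ_T for every number m of particles. -/

import Mathlib

/-!
Each particle is unbiased on its own: for every stage `t`, particle `i` and bounded `G ≥ 0`,
`E[G(X̃_t^i) H_{t-1}^i] = E_q[G(X_t)]`. Mutation preserves this because, given the past, `X̃_t^i`
is a `q_t`-move of `X_{t-1}^i` while `H_{t-1}^i` is already known. Resampling preserves it because
`W_t^b H̃_t^b = m⁻¹ H_{t-1}^b`, so drawing the ancestor `b` with probability `W_t^b` averages the
`m` particles with equal weights. Induction on `t` gives the identity for bounded `G`, monotone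
truncation extends it to `G = ψ L_T` at `t = T`, and averaging over the particles gives the claim.
-/

open MeasureTheory ProbabilityTheory Filter

noncomputable section

namespace PFPaper

variable {S : Type} [MeasurableSpace S]

/-- A user of path space `ℕ → S`: coordinate `t-1` of a path represents the
state `x_t` of the chain, `t = 1, 2, …`.  `DependsOn t F` says that `F`
depends only on the coordinates `0, …, t-1`, i.e. on `(x_1, …, x_t)`. -/
def DependsOn (t : ℕ) (F : (ℕ → S) → ℝ) : Prop :=
  ∀ x y : ℕ → S, (∀ i < t, x i = y i) → F x = F y

/-- The σ-algebra on path space generated by the first `t` coordinates,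
i.e. by `(x_1, …, x_t)`. -/
def pathSA (S : Type) [MeasurableSpace S] (t : ℕ) : MeasurableSpace (ℕ → S) :=
  MeasurableSpace.comap (fun (x : ℕ → S) (i : Fin t) => x (i : ℕ)) inferInstance

/-- `Q` is the law on path space of the proposal chain `X_1, X_2, …` (under
which `X_t | X_{t-1}` has the proposal density `q_t(·|X_{t-1})`), and for
`1 ≤ t ≤ T`, `κ t` maps a path `x` to the law of the path agreeing with `x` on
coordinates `< t - 1` and whose coordinate `t-1` (the state `x_t`) is a fresh
draw from `q_t(·|x_{t-1})`; `κ t` is a regular conditional distribution for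
`Q` given the first `t-1` coordinates. -/
structure IsProposal (Q : Measure (ℕ → S)) (κ : ℕ → Kernel (ℕ → S) (ℕ → S))
    (T : ℕ) : Prop where
  markov : ∀ t, IsMarkovKernel (κ t)
  init_const : ∀ x y, κ 1 x = κ 1 y
  keeps_past : ∀ t, 1 ≤ t → t ≤ T → ∀ x, ∀ᵐ y ∂(κ t x), ∀ j < t - 1, y j = x j
  cond_law : ∀ t, 1 ≤ t → t ≤ T → ∀ g : (ℕ → S) → ℝ, Measurable g →
    (∃ C, ∀ x, |g x| ≤ C) →
    Q[g|pathSA S (t - 1)] =ᵐ[Q] fun x => ∫ y, g y ∂(κ t x)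

/-- `η_t = E_q[∏_{k=1}^t w_k(X_k)]`, with `η_0 = 1`. -/
def eta (Q : Measure (ℕ → S)) (w : ℕ → (ℕ → S) → ℝ) (t : ℕ) : ℝ :=
  ∫ x, ∏ k ∈ Finset.Icc 1 t, w k x ∂Q

/-- `h_t^*(x_t) = η_t / ∏_{k=1}^t w_k(x_k)`, with `h_0^* ≡ 1`. -/
def hstar (Q : Measure (ℕ → S)) (w : ℕ → (ℕ → S) → ℝ) (t : ℕ) (x : ℕ → S) : ℝ :=
  eta Q w t / ∏ k ∈ Finset.Icc 1 t, w k x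

/-- `Γ_t(x_t) = ∏_{k=1}^t [w_k(x_k) + w_k²(x_k)]`, with `Γ_0 ≡ 1`. -/
def Gam (w : ℕ → (ℕ → S) → ℝ) (t : ℕ) (x : ℕ → S) : ℝ :=
  ∏ k ∈ Finset.Icc 1 t, (w k x + (w k x) ^ 2)

/-- Regularity of the weight functions `w_t`, `1 ≤ t ≤ T`: they are positive,
measurable, and `w_t` depends only on `(x_1, …, x_t)`. -/
structure WeightFns (w : ℕ → (ℕ → S) → ℝ) (T : ℕ) : Prop where
  meas : ∀ t, Measurable (w t)
  pos : ∀ t x, 0 < w t x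
  dep : ∀ t, 1 ≤ t → t ≤ T → DependsOn t (w t)

/-- All normalizing constants `η_t`, `t ≤ T`, are finite and positive. -/
def EtaFinite (Q : Measure (ℕ → S)) (w : ℕ → (ℕ → S) → ℝ) (T : ℕ) : Prop :=
  ∀ t ≤ T, Integrable (fun x => ∏ k ∈ Finset.Icc 1 t, w k x) Q ∧ 0 < eta Q w t

/-- `f t` is, for `1 ≤ t ≤ T`, a version of `E_q[F(X_T) | X_1, …, X_t]`
(the paper's `f_t(x_t) = E_q[F(X_T)|X_t = x_t]`), with `f T = F` pointwise. -/
def IsCondExpFamily (Q : Measure (ℕ → S)) (T : ℕ) (F : (ℕ → S) → ℝ)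
    (f : ℕ → (ℕ → S) → ℝ) : Prop :=
  (∀ t, 1 ≤ t → t ≤ T →
    Measurable (f t) ∧ DependsOn t (f t) ∧ Q[F|pathSA S t] =ᵐ[Q] f t) ∧
  ∀ x, f T x = F x

/-- `ψ_T = E[ψ(X_T)|Y_T] = η_T⁻¹ E_q[ψ(X_T) ∏_{k=1}^T w_k(X_k)]`
(the importance-sampling representation of the posterior mean in the HMM,
where the observations `Y_1, …, Y_T` are fixed and absorbed into `w`). -/
def psiT (Q : Measure (ℕ → S)) (w : ℕ → (ℕ → S) → ℝ) (ψ : (ℕ → S) → ℝ)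
    (T : ℕ) : ℝ :=
  (eta Q w T)⁻¹ * ∫ x, ψ x * ∏ k ∈ Finset.Icc 1 T, w k x ∂Q

/-- The likelihood ratio `L_T = p̃_T(·|Y_T)/∏_{t=1}^T q_t = η_T⁻¹ ∏_{t=1}^T w_t`
of the HMM. -/
def Lfun (Q : Measure (ℕ → S)) (w : ℕ → (ℕ → S) → ℝ) (T : ℕ) (x : ℕ → S) : ℝ :=
  (eta Q w T)⁻¹ * ∏ k ∈ Finset.Icc 1 T, w k x

/-- `σ² = Σ_{k=1}^{2T-1} σ_k²` of Theorem 1, where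
`σ²_{2t-1} = E_q{[f_t²(X_t) − f_{t-1}²(X_{t-1})] h*_{t-1}(X_{t-1})}` and
`σ²_{2t} = E_q[f_t²(X_t) h_t*(X_t)]`. -/
def sigmaSq (Q : Measure (ℕ → S)) (w : ℕ → (ℕ → S) → ℝ) (T : ℕ)
    (f : ℕ → (ℕ → S) → ℝ) : ℝ :=
  (∑ t ∈ Finset.Icc 1 T,
    ∫ x, ((f t x) ^ 2 - (f (t - 1) x) ^ 2) * hstar Q w (t - 1) x ∂Q) +
  ∑ t ∈ Finset.Icc 1 (T - 1), ∫ x, (f t x) ^ 2 * hstar Q w t x ∂Q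

/-- finiteness (`σ² < ∞`) of all the expectations entering `σ²`. -/
def SigmaSqFin (Q : Measure (ℕ → S)) (w : ℕ → (ℕ → S) → ℝ) (T : ℕ)
    (f : ℕ → (ℕ → S) → ℝ) : Prop :=
  (∀ t, 1 ≤ t → t ≤ T →
    Integrable (fun x => ((f t x) ^ 2 - (f (t - 1) x) ^ 2) * hstar Q w (t - 1) x) Q) ∧
  ∀ t, 1 ≤ t → t ≤ T - 1 → Integrable (fun x => (f t x) ^ 2 * hstar Q w t x) Q

/-- The family `f_t`, `0 ≤ t ≤ T`, of Theorem 1: `f_0 = 0` and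
`f_t(x_t) = E_q{[ψ(X_T) − ψ_T] L_T(X_T) | X_t = x_t}`. -/
def IsHMMfFamily (Q : Measure (ℕ → S)) (w : ℕ → (ℕ → S) → ℝ) (T : ℕ)
    (ψ : (ℕ → S) → ℝ) (f : ℕ → (ℕ → S) → ℝ) : Prop :=
  (∀ x, f 0 x = 0) ∧
  IsCondExpFamily Q T (fun x => (ψ x - psiT Q w ψ T) * Lfun Q w T x) f


/-- The random variables generated by the bootstrap particle filter with `m`
particles and time horizon `T`:  `Xtil t i = X̃_t^i` is the trajectory of
particle `i` at stage `t` after the importance-sampling (mutation) step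
(meaningful coordinates `0, …, t-1`, representing stages `1, …, t`),
`Xres t i = X_t^i` is the trajectory of particle `i` after the stage-`t`
resampling step, `A t i = A_t^i` is the ancestral origin, and `B t j = B_t^j`
is the index resampled for the `j`-th particle at stage `t`. -/
structure Particles (S : Type) [MeasurableSpace S] (T m : ℕ) where
  Ω : Type
  mΩ : MeasurableSpace Ω
  P : @Measure Ω mΩ
  hP : @IsProbabilityMeasure Ω mΩ P
  Xtil : ℕ → ℕ → Ω → ℕ → S
  Xres : ℕ → ℕ → Ω → ℕ → S
  A : ℕ → ℕ → Ω → ℕ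
  B : ℕ → ℕ → Ω → ℕ
  hXtil_meas : ∀ t i, @Measurable Ω (ℕ → S) mΩ inferInstance (Xtil t i)
  hXres_meas : ∀ t i, @Measurable Ω (ℕ → S) mΩ inferInstance (Xres t i)
  hA_meas : ∀ t i, @Measurable Ω ℕ mΩ inferInstance (A t i)
  hB_meas : ∀ t i, @Measurable Ω ℕ mΩ inferInstance (B t i)

attribute [instance] Particles.mΩ Particles.hP

namespace Particles

variable {S : Type} [MeasurableSpace S] {T m : ℕ} (PF : Particles S T m)
variable (w : ℕ → (ℕ → S) → ℝ)

/-- Pointwise dynamics of the bootstrap filter: `A_0^i = i`; the mutated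
particle `X̃_t^i` extends `X_{t-1}^i`; and the stage-`t` resampling
(`1 ≤ t ≤ T-1`) sets `(X_t^j, A_t^j) = (X̃_t^{B_t^j}, A_{t-1}^{B_t^j})`. -/
def Dynamics : Prop :=
  (∀ i ω, PF.A 0 i ω = i) ∧
  (∀ t i ω, ∀ j < t - 1, PF.Xtil t i ω j = PF.Xres (t - 1) i ω j) ∧
  (∀ t j ω, PF.B t j ω < m) ∧
  (∀ t, 1 ≤ t → t ≤ T - 1 → ∀ j ω,
    PF.Xres t j ω = PF.Xtil t (PF.B t j ω) ω ∧
    PF.A t j ω = PF.A (t - 1) (PF.B t j ω) ω)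

/-- The normalized resampling weights `W_t^i = w_t(X̃_t^i)/Σ_j w_t(X̃_t^j)`. -/
def Wn (t i : ℕ) (ω : PF.Ω) : ℝ :=
  w t (PF.Xtil t i ω) / ∑ j ∈ Finset.range m, w t (PF.Xtil t j ω)

/-- `w̄_t = m⁻¹ Σ_j w_t(X̃_t^j)`. -/
def wbar (t : ℕ) (ω : PF.Ω) : ℝ :=
  (∑ j ∈ Finset.range m, w t (PF.Xtil t j ω)) / m

/-- `H̃_t^i = w̄_1 ⋯ w̄_t h_t(X̃_t^i)`, `h_t(x_t) = 1/∏_{k=1}^t w_k(x_k)`. -/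
def Htil (t i : ℕ) (ω : PF.Ω) : ℝ :=
  (∏ k ∈ Finset.Icc 1 t, PF.wbar w k ω) /
    ∏ k ∈ Finset.Icc 1 t, w k (PF.Xtil t i ω)

/-- `H_t^i = w̄_1 ⋯ w̄_t h_t(X_t^i)`; `H_0^i = 1`. -/
def Hres (t i : ℕ) (ω : PF.Ω) : ℝ :=
  (∏ k ∈ Finset.Icc 1 t, PF.wbar w k ω) /
    ∏ k ∈ Finset.Icc 1 t, w k (PF.Xres t i ω)

/-- `#_t^i`, the number of copies of `X̃_t^i` drawn at the `t`-th resampling. -/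
def cnt (t i : ℕ) (ω : PF.Ω) : ℕ :=
  ((Finset.range m).filter fun j => PF.B t j ω = i).card

/-- The σ-algebra `F_{2t-1}`, generated by `{X̃_1^i}` and
`{(X_s^i, X̃_{s+1}^i, A_s^i) : 1 ≤ s < t}`. -/
def Godd (t : ℕ) : MeasurableSpace PF.Ω :=
  (⨆ i ∈ Finset.range m, MeasurableSpace.comap (PF.Xtil 1 i) inferInstance) ⊔
    ⨆ s ∈ Finset.Ico 1 t, ⨆ i ∈ Finset.range m,
      MeasurableSpace.comap
        (fun ω => (PF.Xres s i ω, PF.Xtil (s + 1) i ω, PF.A s i ω)) inferInstance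

/-- The σ-algebra `F_{2t}` (`F_0` is trivial). -/
def Geven (t : ℕ) : MeasurableSpace PF.Ω :=
  if t = 0 then ⊥ else
    PF.Godd t ⊔ ⨆ i ∈ Finset.range m,
      MeasurableSpace.comap (fun ω => (PF.Xres t i ω, PF.A t i ω)) inferInstance

/-- Conditionally on `F_{2(t-1)}`, the mutated particles `X̃_t^1, …, X̃_t^m`
are independent, with `X̃_t^i ∼ κ t (X_{t-1}^i)` (i.e. `X̃_t^i` is `X_{t-1}^i`
extended by a fresh draw from the proposal density `q_t(·|X_{t-1}^i)`). -/
def PropagationLaw (κ : ℕ → Kernel (ℕ → S) (ℕ → S)) : Prop :=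
  ∀ t, 1 ≤ t → t ≤ T → ∀ g : ℕ → (ℕ → S) → ℝ, (∀ i, Measurable (g i)) →
    (∀ i, ∃ C, ∀ x, |g i x| ≤ C) →
    PF.P[fun ω => ∏ i ∈ Finset.range m, g i (PF.Xtil t i ω)|PF.Geven (t - 1)]
      =ᵐ[PF.P]
    fun ω => ∏ i ∈ Finset.range m, ∫ y, g i y ∂(κ t (PF.Xres (t - 1) i ω))

/-- Conditionally on `F_{2t-1}`, the indices `B_t^1, …, B_t^m` are i.i.d. with
`P(B_t^j = i) = W_t^i` (bootstrap/multinomial resampling). -/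
def ResamplingLaw : Prop :=
  ∀ t, 1 ≤ t → t ≤ T - 1 → ∀ g : ℕ → ℕ → ℝ,
    PF.P[fun ω => ∏ j ∈ Finset.range m, g j (PF.B t j ω)|PF.Godd t]
      =ᵐ[PF.P]
    fun ω => ∏ j ∈ Finset.range m, ∑ i ∈ Finset.range m, PF.Wn w t i ω * g j i

/-- All structural assumptions on the bootstrap particle filter with
bootstrap resampling at every stage. -/
def IsBootstrapFilter (κ : ℕ → Kernel (ℕ → S) (ℕ → S)) : Prop :=
  PF.Dynamics ∧ PF.PropagationLaw κ ∧ PF.ResamplingLaw w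

/-- The particle filter estimate
`ψ̂_T = (m w̄_T)⁻¹ Σ_i ψ(X̃_T^i) w_T(X̃_T^i)`. -/
def psiHat (ψ : (ℕ → S) → ℝ) (ω : PF.Ω) : ℝ :=
  ((m : ℝ) * PF.wbar w T ω)⁻¹ *
    ∑ i ∈ Finset.range m, ψ (PF.Xtil T i ω) * w T (PF.Xtil T i ω)

/-- The prototype estimate
`ψ̃_T = m⁻¹ Σ_i L_T(X̃_T^i) ψ(X̃_T^i) H_{T-1}^i`. -/
def psiTilde (L ψ : (ℕ → S) → ℝ) (ω : PF.Ω) : ℝ :=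
  (m : ℝ)⁻¹ * ∑ i ∈ Finset.range m,
    L (PF.Xtil T i ω) * ψ (PF.Xtil T i ω) * PF.Hres w (T - 1) i ω

end Particles

/-- Convergence in probability to a constant `c`, for a family of random
variables defined on the `m`-particle systems, as `m → ∞`. -/
def ConvInProb {S : Type} [MeasurableSpace S] {T : ℕ}
    (PF : ∀ m : ℕ, Particles S T m) (Z : ∀ m, (PF m).Ω → ℝ) (c : ℝ) : Prop :=
  ∀ ε > (0 : ℝ),
    Tendsto (fun m => (PF m).P {ω | ε ≤ |Z m ω - c|}) atTop (nhds 0)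

/-- Convergence in distribution to the normal law `N(0, v)` as `m → ∞`. -/
def ConvToGaussian {S : Type} [MeasurableSpace S] {T : ℕ}
    (PF : ∀ m : ℕ, Particles S T m) (Z : ∀ m, (PF m).Ω → ℝ) (v : ℝ) : Prop :=
  ∀ φ : BoundedContinuousFunction ℝ ℝ,
    Tendsto (fun m => ∫ ω, φ (Z m ω) ∂(PF m).P) atTop
      (nhds (∫ x, φ x ∂(gaussianReal 0 (Real.toNNReal v))))

open Topology

section Truncation

variable {α : Type*} [MeasurableSpace α] {μ : Measure α}

lemma tendsto_min_natCast (c : ℝ) : Tendsto (fun n : ℕ => min c (n : ℝ)) atTop (𝓝 c) :=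
  tendsto_atTop_of_eventually_const (i₀ := ⌈c⌉₊) fun _ hn =>
    min_eq_left ((Nat.le_ceil c).trans (Nat.cast_le.mpr hn))

lemma monotone_min_natCast (c : ℝ) : Monotone fun n : ℕ => min c (n : ℝ) :=
  fun _ _ hab => min_le_min le_rfl (Nat.cast_le.mpr hab)

lemma integrable_and_integral_eq_of_tendsto_monotone {f : ℕ → α → ℝ} {F : α → ℝ} {c : ℝ}
    (hf : ∀ n, Integrable (f n) μ) (hf0 : ∀ n x, 0 ≤ f n x)
    (hmono : ∀ x, Monotone fun n => f n x) (hF : AEStronglyMeasurable F μ)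
    (hlim : ∀ x, Tendsto (fun n => f n x) atTop (𝓝 (F x)))
    (hc : Tendsto (fun n => ∫ x, f n x ∂μ) atTop (𝓝 c)) :
    Integrable F μ ∧ ∫ x, F x ∂μ = c := by
  have hF0 : ∀ x, 0 ≤ F x := fun x => ge_of_tendsto' (hlim x) fun n => hf0 n x
  have hlintegral : ∫⁻ x, ENNReal.ofReal (F x) ∂μ = ENNReal.ofReal c := by
    refine tendsto_nhds_unique (lintegral_tendsto_of_tendsto_of_monotone
      (fun n => (hf n).aemeasurable.ennreal_ofReal)
      (ae_of_all _ fun x _ _ hab => ENNReal.ofReal_le_ofReal (hmono x hab))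
      (ae_of_all _ fun x => (ENNReal.continuous_ofReal.tendsto _).comp (hlim x))) ?_
    simp_rw [← ofReal_integral_eq_lintegral_ofReal (hf _) (ae_of_all _ (hf0 _))]
    exact (ENNReal.continuous_ofReal.tendsto _).comp hc
  have hc0 : 0 ≤ c := ge_of_tendsto' hc fun n => integral_nonneg (hf0 n)
  refine ⟨⟨hF, ?_⟩, ?_⟩
  · rw [hasFiniteIntegral_iff_ofReal (ae_of_all _ hF0), hlintegral]
    exact ENNReal.ofReal_lt_top
  · rw [integral_eq_lintegral_of_nonneg_ae (ae_of_all _ hF0) hF, hlintegral,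
      ENNReal.toReal_ofReal hc0]

/-- `f` need not be integrable, so the pull-out property is applied to the truncations
`min f n`. -/
lemma integrable_and_integral_mul_eq_of_condExp_eq {Ω : Type*} {m m₀ : MeasurableSpace Ω}
    {μ : Measure[m₀] Ω} [IsFiniteMeasure μ] (hm : m ≤ m₀) {g k f : Ω → ℝ} {C : ℝ}
    (hg : Measurable[m₀] g) (hg0 : ∀ ω, 0 ≤ g ω) (hgC : ∀ ω, g ω ≤ C)
    (hk : Measurable[m₀] k) (hk0 : ∀ ω, 0 ≤ k ω) (hgk : μ[g|m] =ᵐ[μ] k)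
    (hf : Measurable[m] f) (hf0 : ∀ ω, 0 ≤ f ω) (hkf : Integrable (fun ω => k ω * f ω) μ) :
    Integrable (fun ω => g ω * f ω) μ ∧ ∫ ω, g ω * f ω ∂μ = ∫ ω, k ω * f ω ∂μ := by
  set f' : ℕ → Ω → ℝ := fun n ω => min (f ω) n
  have hf'0 : ∀ n ω, 0 ≤ f' n ω := fun n ω => le_min (hf0 ω) n.cast_nonneg
  have hf'm : ∀ n, StronglyMeasurable[m] (f' n) :=
    fun n => (hf.min measurable_const).stronglyMeasurable
  have hf'int : ∀ n, Integrable (f' n) μ := fun n =>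
    .of_bound ((hf'm n).mono hm).aestronglyMeasurable n (ae_of_all _ fun ω => by
      rw [Real.norm_eq_abs, abs_of_nonneg (hf'0 n ω)]
      exact min_le_right _ _)
  have hg_norm : ∀ᵐ ω ∂μ, ‖g ω‖ ≤ C := ae_of_all _ fun ω => by
    rw [Real.norm_eq_abs, abs_of_nonneg (hg0 ω)]
    exact hgC ω
  have hgint : Integrable g μ := .of_bound hg.aestronglyMeasurable C hg_norm
  have hgf'int : ∀ n, Integrable (fun ω => g ω * f' n ω) μ :=
    fun n => (hf'int n).bdd_mul hg.aestronglyMeasurable hg_norm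
  have hpull : ∀ n, ∫ ω, g ω * f' n ω ∂μ = ∫ ω, k ω * f' n ω ∂μ := by
    intro n
    have hint : Integrable (f' n * g) μ :=
      (hgf'int n).congr (ae_of_all _ fun ω => mul_comm (g ω) (f' n ω))
    calc ∫ ω, g ω * f' n ω ∂μ = ∫ ω, (f' n * g) ω ∂μ := by simp only [Pi.mul_apply, mul_comm]
      _ = ∫ ω, (μ[f' n * g|m]) ω ∂μ := (integral_condExp hm).symm
      _ = ∫ ω, k ω * f' n ω ∂μ := integral_congr_ae <|
          (condExp_mul_of_stronglyMeasurable_left (hf'm n) hint hgint).trans <| by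
            filter_upwards [hgk] with ω hω
            rw [Pi.mul_apply, hω, mul_comm]
  have hkf' : Tendsto (fun n => ∫ ω, k ω * f' n ω ∂μ) atTop (𝓝 (∫ ω, k ω * f ω ∂μ)) :=
    integral_tendsto_of_tendsto_of_monotone
      (fun n => hkf.mono' (hk.mul ((hf'm n).measurable.mono hm le_rfl)).aestronglyMeasurable
        (ae_of_all _ fun ω => by
          rw [Real.norm_eq_abs, abs_of_nonneg (mul_nonneg (hk0 ω) (hf'0 n ω))]
          exact mul_le_mul_of_nonneg_left (min_le_left _ _) (hk0 ω)))
      hkf (ae_of_all _ fun ω => (monotone_min_natCast (f ω)).const_mul (hk0 ω))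
      (ae_of_all _ fun ω => (tendsto_min_natCast (f ω)).const_mul (k ω))
  exact integrable_and_integral_eq_of_tendsto_monotone hgf'int
    (fun n ω => mul_nonneg (hg0 ω) (hf'0 n ω))
    (fun ω => (monotone_min_natCast (f ω)).const_mul (hg0 ω))
    (hg.mul (hf.mono hm le_rfl)).aestronglyMeasurable
    (fun ω => (tendsto_min_natCast (f ω)).const_mul (g ω))
    (hkf'.congr fun n => (hpull n).symm)

end Truncation

section Extension

variable {Ω α : Type*} [MeasurableSpace Ω] [MeasurableSpace α] {P : Measure Ω} {Q : Measure α}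
  {X : Ω → α} {H : Ω → ℝ}

lemma integrable_and_integral_comp_mul_eq_of_nonneg (hX : Measurable X) (hH : Measurable H)
    (hH0 : ∀ ω, 0 ≤ H ω)
    (hbdd : ∀ (G : α → ℝ) (C : ℝ), Measurable G → (∀ x, 0 ≤ G x) → (∀ x, G x ≤ C) →
      Integrable (fun ω => G (X ω) * H ω) P ∧ ∫ ω, G (X ω) * H ω ∂P = ∫ x, G x ∂Q)
    {F : α → ℝ} (hF : Measurable F) (hF0 : ∀ x, 0 ≤ F x) (hFint : Integrable F Q) :
    Integrable (fun ω => F (X ω) * H ω) P ∧ ∫ ω, F (X ω) * H ω ∂P = ∫ x, F x ∂Q := by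
  have htrunc := fun n : ℕ => hbdd (fun x => min (F x) n) n (hF.min measurable_const)
    (fun x => le_min (hF0 x) n.cast_nonneg) (fun x => min_le_right _ _)
  have hQlim : Tendsto (fun n : ℕ => ∫ x, min (F x) n ∂Q) atTop (𝓝 (∫ x, F x ∂Q)) :=
    integral_tendsto_of_tendsto_of_monotone
      (fun n => hFint.mono' (hF.min measurable_const).aestronglyMeasurable
        (ae_of_all _ fun x => by
          rw [Real.norm_eq_abs, abs_of_nonneg (le_min (hF0 x) n.cast_nonneg)]
          exact min_le_left _ _))
      hFint (ae_of_all _ fun x => monotone_min_natCast (F x))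
      (ae_of_all _ fun x => tendsto_min_natCast (F x))
  exact integrable_and_integral_eq_of_tendsto_monotone (fun n => (htrunc n).1)
    (fun n ω => mul_nonneg (le_min (hF0 _) n.cast_nonneg) (hH0 ω))
    (fun ω _ _ hab => mul_le_mul_of_nonneg_right (monotone_min_natCast _ hab) (hH0 ω))
    ((hF.comp hX).mul hH).aestronglyMeasurable
    (fun ω => (tendsto_min_natCast (F (X ω))).mul_const (H ω))
    (hQlim.congr fun n => (htrunc n).2.symm)

lemma integrable_and_integral_comp_mul_eq (hX : Measurable X) (hH : Measurable H)
    (hH0 : ∀ ω, 0 ≤ H ω)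
    (hbdd : ∀ (G : α → ℝ) (C : ℝ), Measurable G → (∀ x, 0 ≤ G x) → (∀ x, G x ≤ C) →
      Integrable (fun ω => G (X ω) * H ω) P ∧ ∫ ω, G (X ω) * H ω ∂P = ∫ x, G x ∂Q)
    {F : α → ℝ} (hF : Measurable F) (hFint : Integrable F Q) :
    Integrable (fun ω => F (X ω) * H ω) P ∧ ∫ ω, F (X ω) * H ω ∂P = ∫ x, F x ∂Q := by
  have hFpos : Integrable (fun x => max (F x) 0) Q := hFint.pos_part
  have hFneg : Integrable (fun x => max (-F x) 0) Q := hFint.neg.pos_part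
  obtain ⟨hpos_int, hpos⟩ := integrable_and_integral_comp_mul_eq_of_nonneg hX hH hH0 hbdd
    (hF.max measurable_const) (fun x => le_max_right _ _) hFpos
  obtain ⟨hneg_int, hneg⟩ := integrable_and_integral_comp_mul_eq_of_nonneg hX hH hH0 hbdd
    (F := fun x => max (-F x) 0) (hF.neg.max measurable_const) (fun x => le_max_right _ _)
    hFneg
  have hsplit : ∀ y, F y = max (F y) 0 - max (-F y) 0 :=
    fun y => (max_zero_sub_max_neg_zero_eq_self (F y)).symm
  have hcomp : (fun ω => F (X ω) * H ω) =
      fun ω => max (F (X ω)) 0 * H ω - max (-F (X ω)) 0 * H ω := by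
    ext ω
    rw [← sub_mul, ← hsplit]
  refine ⟨hcomp ▸ hpos_int.sub hneg_int, ?_⟩
  rw [hcomp, integral_sub hpos_int hneg_int, hpos, hneg,
    ← integral_sub hFpos hFneg]
  exact integral_congr_ae (ae_of_all _ fun x => (hsplit x).symm)

end Extension

section KernelMean

variable {α β : Type*} [MeasurableSpace α] [MeasurableSpace β]

def kernelMean (κ : Kernel α β) (G : β → ℝ) (x : α) : ℝ :=
  ∫ y, G y ∂(κ x)

lemma measurable_kernelMean {κ : Kernel α β} [IsSFiniteKernel κ] {G : β → ℝ}
    (hG : Measurable G) : Measurable (kernelMean κ G) :=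
  (StronglyMeasurable.integral_kernel_prod_right' (κ := κ)
    (hG.comp measurable_snd).stronglyMeasurable).measurable

lemma kernelMean_nonneg {κ : Kernel α β} {G : β → ℝ} (hG0 : ∀ x, 0 ≤ G x) (x : α) :
    0 ≤ kernelMean κ G x :=
  integral_nonneg hG0

lemma kernelMean_le {κ : Kernel α β} [IsMarkovKernel κ] {G : β → ℝ} {C : ℝ}
    (hG : Measurable G) (hG0 : ∀ x, 0 ≤ G x) (hGC : ∀ x, G x ≤ C) (x : α) :
    kernelMean κ G x ≤ C := by
  have hint : Integrable G (κ x) := .of_bound hG.aestronglyMeasurable C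
    (ae_of_all _ fun y => by rw [Real.norm_eq_abs, abs_of_nonneg (hG0 y)]; exact hGC y)
  calc kernelMean κ G x ≤ ∫ _, C ∂(κ x) := integral_mono hint (integrable_const C) hGC
    _ = C := by simp

lemma integral_kernelMean {S : Type} [MeasurableSpace S] {Q : Measure (ℕ → S)}
    [IsProbabilityMeasure Q] {κ : ℕ → Kernel (ℕ → S) (ℕ → S)} {T t : ℕ}
    (hκ : IsProposal Q κ T) (ht : 1 ≤ t) (htT : t ≤ T) {G : (ℕ → S) → ℝ} {C : ℝ}
    (hG : Measurable G) (hGC : ∀ x, |G x| ≤ C) :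
    ∫ x, kernelMean (κ t) G x ∂Q = ∫ x, G x ∂Q := by
  have hle : pathSA S (t - 1) ≤ (inferInstance : MeasurableSpace (ℕ → S)) :=
    (measurable_pi_lambda _ fun _ => measurable_pi_apply _).comap_le
  exact (integral_congr_ae (hκ.cond_law t ht htT G hG ⟨C, hGC⟩).symm).trans
    (integral_condExp hle)

end KernelMean

namespace Particles

variable {S : Type} [MeasurableSpace S] {T m : ℕ} (PF : Particles S T m)
  {w : ℕ → (ℕ → S) → ℝ} {κ : ℕ → Kernel (ℕ → S) (ℕ → S)} {Q : Measure (ℕ → S)}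

lemma godd_le (t : ℕ) : PF.Godd t ≤ PF.mΩ :=
  sup_le (iSup₂_le fun i _ => (PF.hXtil_meas 1 i).comap_le)
    (iSup₂_le fun s _ => iSup₂_le fun i _ =>
      ((PF.hXres_meas s i).prodMk ((PF.hXtil_meas (s + 1) i).prodMk (PF.hA_meas s i))).comap_le)

lemma geven_le (t : ℕ) : PF.Geven t ≤ PF.mΩ := by
  unfold Geven
  split
  · exact bot_le
  · exact sup_le (PF.godd_le t)
      (iSup₂_le fun i _ => ((PF.hXres_meas t i).prodMk (PF.hA_meas t i)).comap_le)

lemma godd_le_geven {t : ℕ} (ht : t ≠ 0) : PF.Godd t ≤ PF.Geven t := by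
  rw [Geven, if_neg ht]
  exact le_sup_left

lemma measurable_xtil_godd {t k j : ℕ} (hk : 1 ≤ k) (hkt : k ≤ t) (hj : j < m) :
    Measurable[PF.Godd t] (PF.Xtil k j) := by
  obtain rfl | ⟨s, hs, rfl⟩ : k = 1 ∨ ∃ s, 1 ≤ s ∧ k = s + 1 :=
    (eq_or_lt_of_le hk).imp Eq.symm fun h => ⟨k - 1, by omega, by omega⟩
  · exact Measurable.of_comap_le <| le_sup_of_le_left <|
      le_iSup₂_of_le (f := fun i (_ : i ∈ Finset.range m) =>
        MeasurableSpace.comap (PF.Xtil 1 i) inferInstance) j (Finset.mem_range.mpr hj) le_rfl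
  · have htriple : Measurable[PF.Godd t]
        fun ω => (PF.Xres s j ω, PF.Xtil (s + 1) j ω, PF.A s j ω) :=
      Measurable.of_comap_le <| le_sup_of_le_right <|
        le_iSup₂_of_le s (Finset.mem_Ico.mpr ⟨hs, by omega⟩) <|
          le_iSup₂_of_le (f := fun i (_ : i ∈ Finset.range m) => MeasurableSpace.comap
            (fun ω => (PF.Xres s i ω, PF.Xtil (s + 1) i ω, PF.A s i ω)) inferInstance)
            j (Finset.mem_range.mpr hj) le_rfl
    exact measurable_fst.comp (measurable_snd.comp htriple)

lemma measurable_xres_geven {t i : ℕ} (ht : t ≠ 0) (hi : i < m) :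
    Measurable[PF.Geven t] (PF.Xres t i) := by
  have hpair : Measurable[PF.Geven t] fun ω => (PF.Xres t i ω, PF.A t i ω) := by
    refine Measurable.of_comap_le ?_
    rw [Geven, if_neg ht]
    exact le_sup_of_le_right <| le_iSup₂_of_le (f := fun j (_ : j ∈ Finset.range m) =>
      MeasurableSpace.comap (fun ω => (PF.Xres t j ω, PF.A t j ω)) inferInstance)
      i (Finset.mem_range.mpr hi) le_rfl
  exact measurable_fst.comp hpair

lemma measurable_wbar_godd (hw : WeightFns w T) {t k : ℕ} (hk : 1 ≤ k) (hkt : k ≤ t) :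
    Measurable[PF.Godd t] (PF.wbar w k) :=
  (Finset.measurable_sum _ fun _ hj => (hw.meas k).comp
    (PF.measurable_xtil_godd hk hkt (Finset.mem_range.mp hj))).div_const _

lemma measurable_prod_wbar_godd (hw : WeightFns w T) (t : ℕ) :
    Measurable[PF.Godd t] fun ω => ∏ k ∈ Finset.Icc 1 t, PF.wbar w k ω :=
  Finset.measurable_prod _ fun _ hk =>
    PF.measurable_wbar_godd hw (Finset.mem_Icc.mp hk).1 (Finset.mem_Icc.mp hk).2

lemma measurable_htil_godd (hw : WeightFns w T) {t i : ℕ} (ht : 1 ≤ t) (hi : i < m) :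
    Measurable[PF.Godd t] (PF.Htil w t i) :=
  (PF.measurable_prod_wbar_godd hw t).div
    (Finset.measurable_prod _ fun k _ => (hw.meas k).comp (PF.measurable_xtil_godd ht le_rfl hi))

lemma measurable_hres_geven (hw : WeightFns w T) {t i : ℕ} (ht : t ≠ 0) (hi : i < m) :
    Measurable[PF.Geven t] (PF.Hres w t i) :=
  ((PF.measurable_prod_wbar_godd hw t).mono (PF.godd_le_geven ht) le_rfl).div
    (Finset.measurable_prod _ fun k _ => (hw.meas k).comp (PF.measurable_xres_geven ht hi))

lemma measurable_wbar (hw : WeightFns w T) (t : ℕ) : Measurable (PF.wbar w t) :=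
  (Finset.measurable_sum _ fun j _ => (hw.meas t).comp (PF.hXtil_meas t j)).div_const _

lemma measurable_hres (hw : WeightFns w T) (t i : ℕ) : Measurable (PF.Hres w t i) :=
  (Finset.measurable_prod _ fun k _ => PF.measurable_wbar hw k).div
    (Finset.measurable_prod _ fun k _ => (hw.meas k).comp (PF.hXres_meas t i))

lemma measurable_wn (hw : WeightFns w T) (t i : ℕ) : Measurable (PF.Wn w t i) :=
  ((hw.meas t).comp (PF.hXtil_meas t i)).div
    (Finset.measurable_sum _ fun j _ => (hw.meas t).comp (PF.hXtil_meas t j))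

lemma sum_w_pos (hw : WeightFns w T) (hm : 1 ≤ m) (t : ℕ) (ω : PF.Ω) :
    0 < ∑ j ∈ Finset.range m, w t (PF.Xtil t j ω) :=
  Finset.sum_pos (fun _ _ => hw.pos t _) ⟨0, Finset.mem_range.mpr hm⟩

lemma prod_wbar_pos (hw : WeightFns w T) (hm : 1 ≤ m) (t : ℕ) (ω : PF.Ω) :
    0 < ∏ k ∈ Finset.Icc 1 t, PF.wbar w k ω :=
  Finset.prod_pos fun k _ => div_pos (PF.sum_w_pos hw hm k ω) (by exact_mod_cast hm)

lemma hres_pos (hw : WeightFns w T) (hm : 1 ≤ m) (t i : ℕ) (ω : PF.Ω) :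
    0 < PF.Hres w t i ω :=
  div_pos (PF.prod_wbar_pos hw hm t ω) (Finset.prod_pos fun k _ => hw.pos k _)

lemma htil_pos (hw : WeightFns w T) (hm : 1 ≤ m) (t i : ℕ) (ω : PF.Ω) :
    0 < PF.Htil w t i ω :=
  div_pos (PF.prod_wbar_pos hw hm t ω) (Finset.prod_pos fun k _ => hw.pos k _)

lemma wn_nonneg (hw : WeightFns w T) (hm : 1 ≤ m) (t i : ℕ) (ω : PF.Ω) :
    0 ≤ PF.Wn w t i ω :=
  div_nonneg (hw.pos t _).le (PF.sum_w_pos hw hm t ω).le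

lemma sum_wn (hw : WeightFns w T) (hm : 1 ≤ m) (t : ℕ) (ω : PF.Ω) :
    ∑ b ∈ Finset.range m, PF.Wn w t b ω = 1 := by
  unfold Wn
  rw [← Finset.sum_div]
  exact div_self (PF.sum_w_pos hw hm t ω).ne'

lemma hres_zero (i : ℕ) (ω : PF.Ω) : PF.Hres w 0 i ω = 1 := by
  simp [Hres]

/-- The identity behind the unbiasedness of resampling: the resampling weight exactly cancels
the new factor `w̄_s / w_s` of `H̃_s`. -/
lemma wn_mul_htil (hdyn : PF.Dynamics) (hw : WeightFns w T) (hm : 1 ≤ m) {s : ℕ} (hs : 1 ≤ s)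
    (hsT : s ≤ T) (b : ℕ) (ω : PF.Ω) :
    PF.Wn w s b ω * PF.Htil w s b ω = (m : ℝ)⁻¹ * PF.Hres w (s - 1) b ω := by
  obtain ⟨s, rfl⟩ : ∃ s', s = s' + 1 := ⟨s - 1, by omega⟩
  have hpast : ∏ k ∈ Finset.Icc 1 s, w k (PF.Xtil (s + 1) b ω)
      = ∏ k ∈ Finset.Icc 1 s, w k (PF.Xres s b ω) := by
    refine Finset.prod_congr rfl fun k hk => ?_
    obtain ⟨hk1, hks⟩ := Finset.mem_Icc.mp hk
    exact hw.dep k hk1 (by omega) _ _ fun j hj => hdyn.2.1 (s + 1) b ω j (by omega)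
  have hsum := PF.sum_w_pos hw hm (s + 1) ω
  have hwb := hw.pos (s + 1) (PF.Xtil (s + 1) b ω)
  have hprod : 0 < ∏ k ∈ Finset.Icc 1 s, w k (PF.Xres s b ω) :=
    Finset.prod_pos fun k _ => hw.pos k _
  have hm0 : (m : ℝ) ≠ 0 := by positivity
  simp only [Wn, Htil, Hres, wbar, Nat.add_sub_cancel,
    Finset.prod_Icc_succ_top (by omega : 1 ≤ s + 1), hpast]
  field_simp

lemma hres_eq_htil (hdyn : PF.Dynamics) {s : ℕ} (hs : 1 ≤ s) (hsT : s ≤ T - 1) (i : ℕ)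
    (ω : PF.Ω) : PF.Hres w s i ω = PF.Htil w s (PF.B s i ω) ω := by
  rw [Hres, Htil, (hdyn.2.2.2 s hs hsT i ω).1]


-- Take `g j ≡ 1` for `j ≠ i` in the propagation law.
lemma condExp_comp_xtil (hprop : PF.PropagationLaw κ) (hmk : ∀ t, IsMarkovKernel (κ t))
    {t i : ℕ} (ht : 1 ≤ t) (htT : t ≤ T) (hi : i < m) {G : (ℕ → S) → ℝ} {C : ℝ}
    (hG : Measurable G) (hGC : ∀ x, |G x| ≤ C) :
    PF.P[fun ω => G (PF.Xtil t i ω)|PF.Geven (t - 1)] =ᵐ[PF.P]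
      fun ω => kernelMean (κ t) G (PF.Xres (t - 1) i ω) := by
  have h := hprop t ht htT (fun j => if j = i then G else fun _ => 1)
    (fun j => by split_ifs <;> simp [hG])
    (fun j => by split_ifs; exacts [⟨C, hGC⟩, ⟨1, by simp⟩])
  have hi' := Finset.mem_range.mpr hi
  have hleft : (fun ω => ∏ j ∈ Finset.range m,
      (if j = i then G else fun _ => (1 : ℝ)) (PF.Xtil t j ω)) = fun ω => G (PF.Xtil t i ω) :=
    funext fun ω => by
      rw [Finset.prod_eq_single_of_mem i hi' fun j _ hj => by simp [hj], if_pos rfl]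
  have hright : (fun ω => ∏ j ∈ Finset.range m,
      ∫ y, (if j = i then G else fun _ => (1 : ℝ)) y ∂(κ t (PF.Xres (t - 1) j ω))) =
      fun ω => kernelMean (κ t) G (PF.Xres (t - 1) i ω) :=
    funext fun ω => by
      rw [Finset.prod_eq_single_of_mem i hi' fun j _ hj => by simp [hj], if_pos rfl, kernelMean]
  rwa [hleft, hright] at h

-- Take `g j ≡ 1` for `j ≠ i` in the resampling law.
lemma condExp_indicator_b (hres : PF.ResamplingLaw w) (hw : WeightFns w T) (hm : 1 ≤ m)
    {s i b : ℕ} (hs : 1 ≤ s) (hsT : s ≤ T - 1) (hi : i < m) (hb : b < m) :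
    PF.P[fun ω => if PF.B s i ω = b then (1 : ℝ) else 0|PF.Godd s] =ᵐ[PF.P] PF.Wn w s b := by
  have h := hres s hs hsT fun j a => if j = i then (if a = b then 1 else 0) else 1
  have hi' := Finset.mem_range.mpr hi
  have hb' := Finset.mem_range.mpr hb
  have hleft : (fun ω => ∏ j ∈ Finset.range m,
      (fun j a => if j = i then (if a = b then (1 : ℝ) else 0) else 1) j (PF.B s j ω)) =
      fun ω => if PF.B s i ω = b then (1 : ℝ) else 0 :=
    funext fun ω => by rw [Finset.prod_eq_single_of_mem i hi' fun j _ hj => by simp [hj]]; simp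
  have hright : (fun ω => ∏ j ∈ Finset.range m, ∑ a ∈ Finset.range m,
      PF.Wn w s a ω * (fun j a => if j = i then (if a = b then (1 : ℝ) else 0) else 1) j a) =
      PF.Wn w s b :=
    funext fun ω => by
      rw [Finset.prod_eq_single_of_mem i hi' fun j _ hj => by simp [hj, PF.sum_wn hw hm]]
      simp [hb']
  rwa [hleft, hright] at h


lemma integral_xtil_succ_mul_hres (hw : WeightFns w T) (hm : 1 ≤ m) (hprop : PF.PropagationLaw κ)
    (hmk : ∀ t, IsMarkovKernel (κ t)) {s i : ℕ} (hs : 1 ≤ s) (hsT : s + 1 ≤ T) (hi : i < m)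
    {G : (ℕ → S) → ℝ} {C : ℝ} (hG : Measurable G) (hG0 : ∀ x, 0 ≤ G x) (hGC : ∀ x, G x ≤ C)
    (hint : Integrable
      (fun ω => kernelMean (κ (s + 1)) G (PF.Xres s i ω) * PF.Hres w s i ω) PF.P) :
    Integrable (fun ω => G (PF.Xtil (s + 1) i ω) * PF.Hres w s i ω) PF.P ∧
    ∫ ω, G (PF.Xtil (s + 1) i ω) * PF.Hres w s i ω ∂PF.P =
      ∫ ω, kernelMean (κ (s + 1)) G (PF.Xres s i ω) * PF.Hres w s i ω ∂PF.P :=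
  integrable_and_integral_mul_eq_of_condExp_eq (PF.geven_le s)
    (hG.comp (PF.hXtil_meas _ i)) (fun _ => hG0 _) (fun _ => hGC _)
    ((measurable_kernelMean hG).comp (PF.hXres_meas s i)) (fun _ => kernelMean_nonneg hG0 _)
    (PF.condExp_comp_xtil hprop hmk (by omega) hsT hi hG
      fun x => (abs_of_nonneg (hG0 x)).trans_le (hGC x))
    (PF.measurable_hres_geven hw (by omega) hi) (fun ω => (PF.hres_pos hw hm s i ω).le) hint

lemma integral_xres_mul_hres (hdyn : PF.Dynamics) (hres : PF.ResamplingLaw w) (hw : WeightFns w T)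
    (hm : 1 ≤ m) {s i : ℕ} (hs : 1 ≤ s) (hsT : s ≤ T - 1) (hi : i < m) {F : (ℕ → S) → ℝ}
    (hF : Measurable F) (hF0 : ∀ x, 0 ≤ F x)
    (hint : ∀ b < m, Integrable (fun ω => F (PF.Xtil s b ω) * PF.Hres w (s - 1) b ω) PF.P) :
    Integrable (fun ω => F (PF.Xres s i ω) * PF.Hres w s i ω) PF.P ∧
    ∫ ω, F (PF.Xres s i ω) * PF.Hres w s i ω ∂PF.P =
      (m : ℝ)⁻¹ * ∑ b ∈ Finset.range m,
        ∫ ω, F (PF.Xtil s b ω) * PF.Hres w (s - 1) b ω ∂PF.P := by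
  set Z : ℕ → PF.Ω → ℝ := fun b ω => F (PF.Xtil s b ω) * PF.Htil w s b ω
  set ind : ℕ → PF.Ω → ℝ := fun b ω => if PF.B s i ω = b then 1 else 0
  have hWZ : ∀ b ω, PF.Wn w s b ω * Z b ω =
      (m : ℝ)⁻¹ * (F (PF.Xtil s b ω) * PF.Hres w (s - 1) b ω) := fun b ω => by
    rw [mul_left_comm, PF.wn_mul_htil hdyn hw hm hs (by omega), mul_left_comm]
  have hsplit : ∀ ω, F (PF.Xres s i ω) * PF.Hres w s i ω =
      ∑ b ∈ Finset.range m, ind b ω * Z b ω := fun ω => by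
    rw [Finset.sum_eq_single_of_mem (PF.B s i ω) (Finset.mem_range.mpr (hdyn.2.2.1 s i ω))
      fun b _ hb => by simp [ind, Ne.symm hb]]
    simp only [ind, Z, if_pos rfl, one_mul, PF.hres_eq_htil hdyn hs hsT,
      (hdyn.2.2.2 s hs hsT i ω).1]
  have hterm : ∀ b ∈ Finset.range m, Integrable (fun ω => ind b ω * Z b ω) PF.P ∧
      ∫ ω, ind b ω * Z b ω ∂PF.P = ∫ ω, PF.Wn w s b ω * Z b ω ∂PF.P := fun b hb => by
    have hb := Finset.mem_range.mp hb
    refine integrable_and_integral_mul_eq_of_condExp_eq (PF.godd_le s) (C := 1)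
      (Measurable.ite ((PF.hB_meas s i) (measurableSet_singleton b)) measurable_const
        measurable_const) (fun ω => by simp only [ind]; split_ifs <;> norm_num)
      (fun ω => by simp only [ind]; split_ifs <;> norm_num) (PF.measurable_wn hw s b)
      (PF.wn_nonneg hw hm s b) (PF.condExp_indicator_b hres hw hm hs hsT hi hb)
      ((hF.comp (PF.measurable_xtil_godd hs le_rfl hb)).mul (PF.measurable_htil_godd hw hs hb))
      (fun ω => mul_nonneg (hF0 _) (PF.htil_pos hw hm s b ω).le) ?_
    simpa only [hWZ] using (hint b hb).const_mul (m : ℝ)⁻¹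
  refine ⟨(integrable_finsetSum _ fun b hb => (hterm b hb).1).congr
    (ae_of_all _ fun ω => (hsplit ω).symm), ?_⟩
  rw [integral_congr_ae (ae_of_all _ hsplit), integral_finsetSum _ fun b hb => (hterm b hb).1,
    Finset.mul_sum]
  refine Finset.sum_congr rfl fun b hb => ?_
  rw [(hterm b hb).2, ← integral_const_mul]
  exact integral_congr_ae (ae_of_all _ (hWZ b))

lemma integral_xtil_one (hQ : IsProbabilityMeasure Q) (hκ : IsProposal Q κ T)
    (hprop : PF.PropagationLaw κ) (hT : 1 ≤ T) {i : ℕ} (hi : i < m) {G : (ℕ → S) → ℝ} {C : ℝ}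
    (hG : Measurable G) (hGC : ∀ x, |G x| ≤ C) :
    Integrable (fun ω => G (PF.Xtil 1 i ω)) PF.P ∧
    ∫ ω, G (PF.Xtil 1 i ω) ∂PF.P = ∫ x, G x ∂Q := by
  refine ⟨.of_bound (hG.comp (PF.hXtil_meas 1 i)).aestronglyMeasurable C
    (ae_of_all _ fun ω => hGC _), ?_⟩
  have hconst : ∀ x, kernelMean (κ 1) G x = ∫ y, kernelMean (κ 1) G y ∂Q := fun x => by
    rw [integral_congr_ae (ae_of_all _ fun y => by rw [kernelMean, hκ.init_const y x]),
      integral_const, probReal_univ, one_smul, kernelMean]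
  calc ∫ ω, G (PF.Xtil 1 i ω) ∂PF.P
      = ∫ ω, (PF.P[fun ω => G (PF.Xtil 1 i ω)|PF.Geven 0]) ω ∂PF.P :=
        (integral_condExp (PF.geven_le 0)).symm
    _ = ∫ ω, kernelMean (κ 1) G (PF.Xres 0 i ω) ∂PF.P :=
        integral_congr_ae (PF.condExp_comp_xtil hprop hκ.markov le_rfl hT hi hG hGC)
    _ = ∫ _, (∫ y, kernelMean (κ 1) G y ∂Q) ∂PF.P :=
        integral_congr_ae (ae_of_all _ fun _ => hconst _)
    _ = ∫ x, G x ∂Q := by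
        rw [integral_const, probReal_univ, one_smul, integral_kernelMean hκ le_rfl hT hG hGC]

theorem integral_xtil_mul_hres_of_bounded (hQ : IsProbabilityMeasure Q) (hκ : IsProposal Q κ T)
    (hw : WeightFns w T) (hm : 1 ≤ m) (hdyn : PF.Dynamics) (hprop : PF.PropagationLaw κ)
    (hres : PF.ResamplingLaw w) {t : ℕ} (ht : 1 ≤ t) (htT : t ≤ T) {i : ℕ} (hi : i < m)
    {G : (ℕ → S) → ℝ} {C : ℝ} (hG : Measurable G) (hG0 : ∀ x, 0 ≤ G x) (hGC : ∀ x, G x ≤ C) :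
    Integrable (fun ω => G (PF.Xtil t i ω) * PF.Hres w (t - 1) i ω) PF.P ∧
    ∫ ω, G (PF.Xtil t i ω) * PF.Hres w (t - 1) i ω ∂PF.P = ∫ x, G x ∂Q := by
  have habs : ∀ {G : (ℕ → S) → ℝ}, (∀ x, 0 ≤ G x) → (∀ x, G x ≤ C) → ∀ x, |G x| ≤ C :=
    fun h0 hC x => (abs_of_nonneg (h0 x)).trans_le (hC x)
  induction t, ht using Nat.le_induction generalizing i G with
  | base =>
    simpa only [Nat.sub_self, PF.hres_zero, mul_one] using
      PF.integral_xtil_one hQ hκ hprop htT hi hG (habs hG0 hGC)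
  | succ n hn ih =>
    have hmk := hκ.markov
    set G' := kernelMean (κ (n + 1)) G
    have hG' : Measurable G' := measurable_kernelMean hG
    have hG'0 : ∀ x, 0 ≤ G' x := kernelMean_nonneg hG0
    have hG'C : ∀ x, G' x ≤ C := kernelMean_le hG hG0 hGC
    have hIH := fun b (hb : b < m) => ih (by omega) hb hG' hG'0 hG'C
    obtain ⟨hres_int, hres_eq⟩ := PF.integral_xres_mul_hres hdyn hres hw hm hn (by omega) hi hG'
      hG'0 fun b hb => (hIH b hb).1
    obtain ⟨hmut_int, hmut_eq⟩ :=
      PF.integral_xtil_succ_mul_hres hw hm hprop hmk hn htT hi hG hG0 hGC hres_int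
    refine ⟨hmut_int, ?_⟩
    have hm0 : (m : ℝ) ≠ 0 := by positivity
    rw [Nat.add_sub_cancel, hmut_eq, hres_eq,
      Finset.sum_congr rfl fun b hb => (hIH b (Finset.mem_range.mp hb)).2, Finset.sum_const,
      Finset.card_range, nsmul_eq_mul, inv_mul_cancel_left₀ hm0,
      integral_kernelMean hκ (by omega) htT hG (habs hG0 hGC)]

end Particles

theorem statement_5_general {S : Type} [MeasurableSpace S] (T : ℕ) (hT : 1 ≤ T)
    (Q : Measure (ℕ → S)) (hQ : IsProbabilityMeasure Q)
    (κ : ℕ → Kernel (ℕ → S) (ℕ → S)) (hκ : IsProposal Q κ T)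
    (w : ℕ → (ℕ → S) → ℝ) (hw : WeightFns w T)
    (ψ L : (ℕ → S) → ℝ)
    (hψ : Measurable ψ)
    (hL : Measurable L)
    (hint : Integrable (fun x => ψ x * L x) Q)
    (m : ℕ) (hm : 1 ≤ m) (PF : Particles S T m)
    (hPF : PF.IsBootstrapFilter w κ) :
    Integrable (PF.psiTilde w L ψ) PF.P ∧
    ∫ ω, PF.psiTilde w L ψ ω ∂PF.P = ∫ x, ψ x * L x ∂Q := by
  obtain ⟨hdyn, hprop, hres⟩ := hPF
  have hparticle : ∀ i ∈ Finset.range m,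
      Integrable (fun ω => L (PF.Xtil T i ω) * ψ (PF.Xtil T i ω) * PF.Hres w (T - 1) i ω) PF.P ∧
      ∫ ω, L (PF.Xtil T i ω) * ψ (PF.Xtil T i ω) * PF.Hres w (T - 1) i ω ∂PF.P =
        ∫ x, ψ x * L x ∂Q := fun i hi => by
    simp_rw [mul_comm (ψ _) (L _)]
    exact integrable_and_integral_comp_mul_eq (PF.hXtil_meas T i) (PF.measurable_hres hw _ i)
      (fun ω => (PF.hres_pos hw hm _ i ω).le)
      (fun _ _ hG hG0 hGC => PF.integral_xtil_mul_hres_of_bounded hQ hκ hw hm hdyn hprop hres hT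
        le_rfl (Finset.mem_range.mp hi) hG hG0 hGC)
      (F := fun x => L x * ψ x) (hL.mul hψ) (hint.congr (ae_of_all _ fun x => mul_comm _ _))
  refine ⟨(integrable_finsetSum _ fun i hi => (hparticle i hi).1).const_mul _, ?_⟩
  have hm0 : (m : ℝ) ≠ 0 := by positivity
  unfold Particles.psiTilde
  rw [integral_const_mul, integral_finsetSum _ fun i hi => (hparticle i hi).1,
    Finset.sum_congr rfl fun i hi => (hparticle i hi).2, Finset.sum_const, Finset.card_range,
    nsmul_eq_mul, inv_mul_cancel_left₀ hm0]

/-- unbiasedness of the prototype estimate.  In the basic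
prototype with the bootstrap particle filter, `ψ̃_T` is an unbiased estimate
of `ψ_T = E[ψ(X_T)|Y_T] = E_q[ψ(X_T) L_T(X_T)]`, for every number `m ≥ 1` of
particles.  Here `L_T = p̃_T/∏_t q_t` is the likelihood ratio, which is
nonnegative with `E_q L_T = 1` since `p̃_T(·) = p̃_T(·|Y_T)` is the
conditional density of `X_T` given `Y_T`, and `ψ(X_T) L_T(X_T)` is assumed
`E_q`-integrable. -/
theorem statement_5 {S : Type} [MeasurableSpace S] (T : ℕ) (hT : 1 ≤ T)
    (Q : Measure (ℕ → S)) (hQ : IsProbabilityMeasure Q)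
    (κ : ℕ → Kernel (ℕ → S) (ℕ → S)) (hκ : IsProposal Q κ T)
    (w : ℕ → (ℕ → S) → ℝ) (hw : WeightFns w T)
    (ψ L : (ℕ → S) → ℝ)
    (hψ : Measurable ψ) (hψdep : DependsOn T ψ)
    (hL : Measurable L) (hLdep : DependsOn T L) (hLpos : ∀ x, 0 ≤ L x)
    (hLdens : ∫ x, L x ∂Q = 1)
    (hint : Integrable (fun x => ψ x * L x) Q)
    (m : ℕ) (hm : 1 ≤ m) (PF : Particles S T m)
    (hPF : PF.IsBootstrapFilter w κ) :
    Integrable (PF.psiTilde w L ψ) PF.P ∧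
    ∫ ω, PF.psiTilde w L ψ ω ∂PF.P = ∫ x, ψ x * L x ∂Q :=
  statement_5_general T hT Q hQ κ hκ w hw ψ L hψ hL hint m hm PF hPF

end PFPaper
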